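/- The semicommutator of two Toeplitz operators with smooth symbols is a smooth compact operator: for all smooth functions f, g : ℝ → ℂ with f(t+1) = f(t) and g(t+1) = g(t), and all i, j ∈ ℕ, the series Σ_{k=0}^∞ f̂(i−k)·ĝ(k−j) converges absolutely, and the matrix a(i,j) = Σ_{k=0}^∞ f̂(i−k)·ĝ(k−j) − (f·g)^(i−j) is rapidly decreasing, where (f·g)^ denotes the Fourier coefficients of the pointwise product f·g. (Equivalently, a(i,j) = −Σ_{k=1}^∞ f̂(i+k)·ĝ(−k−j).) -/

import Mathlib

open Complex MeasureTheory Real Set Function intervalIntegral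
open scoped ENNReal NNReal

/-- The `n`-th Fourier coefficient `f̂(n) = ∫₀¹ f(t)·exp(−2πint) dt` of a
1-periodic function. -/
noncomputable def fc (f : ℝ → ℂ) (n : ℤ) : ℂ :=
  ∫ t in (0:ℝ)..1, f t * Complex.exp (-(2 * (Real.pi : ℂ) * Complex.I * (n : ℂ) * (t : ℂ)))

/-- A matrix `a : ℕ × ℕ → ℂ` is rapidly decreasing (a smooth compact operator) if
`sup_{i,j} (1+i)^m (1+j)^n |a(i,j)| < ∞` for all `m, n`. -/
def RapidDecay (a : ℕ → ℕ → ℂ) : Prop :=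
  ∀ m n : ℕ, ∃ C : ℝ, ∀ i j : ℕ,
    (1 + (i : ℝ)) ^ m * (1 + (j : ℝ)) ^ n * ‖a i j‖ ≤ C

lemma abs_exp_aux (n : ℤ) (t : ℝ) :
    ‖Complex.exp (-(2 * (Real.pi : ℂ) * Complex.I * (n : ℂ) * (t : ℂ)))‖ = 1 := by
  rw [Complex.norm_exp]
  simp [Complex.mul_re, Complex.mul_im]

lemma fc_bound (f : ℝ → ℂ) (hfc : Continuous f) :
    ∃ C : ℝ, 0 ≤ C ∧ ∀ n : ℤ, ‖fc f n‖ ≤ C := by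
  obtain ⟨C, hC⟩ := isCompact_Icc.exists_bound_of_continuousOn
    (s := Icc (0:ℝ) 1) hfc.continuousOn
  refine ⟨max C 0, le_max_right _ _, fun n => ?_⟩
  have : ‖∫ t in (0:ℝ)..1, f t * Complex.exp (-(2 * (Real.pi : ℂ) * Complex.I * (n : ℂ) * (t : ℂ)))‖ ≤ max C 0 * |(1:ℝ) - 0| := by
    refine intervalIntegral.norm_integral_le_of_norm_le_const fun x hx => ?_
    rw [Set.uIoc_of_le zero_le_one] at hx
    rw [norm_mul]
    calc ‖f x‖ * ‖Complex.exp _‖ = ‖f x‖ * 1 := by rw [abs_exp_aux]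
    _ ≤ max C 0 := by
        rw [mul_one]; exact le_trans (hC x (Ioc_subset_Icc_self hx)) (le_max_left _ _)
  simpa [fc] using this

lemma periodic_deriv' (f : ℝ → ℂ) (hfp : Function.Periodic f 1) :
    Function.Periodic (deriv f) 1 := by
  intro x
  have : (fun y : ℝ => f (y + 1)) = f := funext fun y => hfp y
  calc deriv f (x + 1) = deriv (fun y : ℝ => f (y + 1)) x := (deriv_comp_add_const f 1 x).symm
  _ = deriv f x := by rw [this]

lemma fc_eq_on (f : ℝ → ℂ) (n : ℤ) :
    fc f n = fourierCoeffOn zero_lt_one f n := by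
  rw [fourierCoeffOn_eq_integral]
  simp only [sub_zero, one_div, one_smul, inv_one]
  refine intervalIntegral.integral_congr fun t ht => ?_
  rw [fourier_coe_apply]
  rw [smul_eq_mul, mul_comm]
  congr 1
  push_cast
  ring

lemma fc_deriv (f : ℝ → ℂ) (hf : ContDiff ℝ (⊤ : ℕ∞) f) (hfp : Function.Periodic f 1) (n : ℤ) :
    fc (deriv f) n = 2 * (Real.pi : ℂ) * Complex.I * (n : ℂ) * fc f n := by
  have hder : Differentiable ℝ f := hf.differentiable (by simp)
  have hcd : Continuous (deriv f) := ((contDiff_infty_iff_deriv.mp hf).2).continuous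
  rcases eq_or_ne n 0 with rfl | hn
  · have : fc (deriv f) 0 = ∫ t in (0:ℝ)..1, deriv f t := by
      refine intervalIntegral.integral_congr fun t ht => ?_
      simp
    rw [this, intervalIntegral.integral_deriv_eq_sub (fun x _ => hder x)
      (hcd.intervalIntegrable _ _)]
    have h1 : f 1 = f 0 := by simpa using hfp 0
    simp [h1]
  · have key := fourierCoeffOn_of_hasDerivAt zero_lt_one hn
      (f := f) (f' := deriv f)
      (fun x _ => (hder x).hasDerivAt) (hcd.intervalIntegrable _ _)
    have h1 : f 1 = f 0 := by simpa using hfp 0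
    rw [h1, sub_self, mul_zero, zero_sub] at key
    rw [fc_eq_on, fc_eq_on, key]
    have hπ : (Real.pi : ℂ) ≠ 0 := Complex.ofReal_ne_zero.mpr Real.pi_ne_zero
    have hnn : (n : ℂ) ≠ 0 := Int.cast_ne_zero.mpr hn
    push_cast
    field_simp
    simp

lemma fc_eq_lift (f : ℝ → ℂ) (hfp : Function.Periodic f 1) (n : ℤ) :
    fc f n = fourierCoeff hfp.lift n := by
  rw [fourierCoeff_eq_intervalIntegral _ n 0]
  simp only [one_div, inv_one, one_smul, zero_add]
  refine intervalIntegral.integral_congr fun t ht => ?_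
  rw [fourier_coe_apply, Function.Periodic.lift_coe, smul_eq_mul, mul_comm]
  congr 1
  push_cast
  ring

lemma periodic_lift_continuous {g : ℝ → ℂ} (hgc : Continuous g)
    (hgp : Function.Periodic g 1) : Continuous hgp.lift := by
  unfold Function.Periodic.lift
  exact hgc.quotient_liftOn' _

lemma pointwise_fourier {g : ℝ → ℂ} (hgc : Continuous g) (hgp : Function.Periodic g 1)
    (hsum : Summable fun k : ℤ => fc g k) (t : ℝ) :
    HasSum (fun k : ℤ => fc g k * Complex.exp (2 * (Real.pi:ℂ) * Complex.I * (k:ℂ) * (t:ℂ)))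
      (g t) := by
  set G : C(AddCircle 1, ℂ) := ⟨hgp.lift, periodic_lift_continuous hgc hgp⟩ with hG
  have hcoeff : ∀ k : ℤ, fourierCoeff (⇑G) k = fc g k := fun k => (fc_eq_lift g hgp k).symm
  have hsum' : Summable (fourierCoeff (⇑G)) := by
    refine hsum.congr fun k => (hcoeff k).symm
  have := has_pointwise_sum_fourier_series_of_summable hsum' (t : AddCircle (1:ℝ))
  have hGt : G (t : AddCircle (1:ℝ)) = g t := Function.Periodic.lift_coe hgp t
  rw [hGt] at this
  refine this.congr_fun fun k => ?_
  rw [hcoeff, fourier_coe_apply, smul_eq_mul]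
  congr 2
  push_cast
  ring

lemma fc_conv_eq (f g : ℝ → ℂ) (hfc : Continuous f) (hgc : Continuous g)
    (hgp : Function.Periodic g 1)
    (hsumabs : Summable fun k : ℤ => ‖fc g k‖) (n : ℤ) :
    fc (fun t => f t * g t) n = ∑' k : ℤ, fc g k * fc f (n - k) := by
  set F : ℤ → ℝ → ℂ := fun k t =>
    fc g k * (f t * Complex.exp (-(2 * (Real.pi : ℂ) * Complex.I * ((n - k : ℤ) : ℂ) * (t : ℂ))))
    with hF
  have hsum : Summable fun k : ℤ => fc g k := Summable.of_norm hsumabs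
  have hpt : ∀ t : ℝ, (fun t => f t * g t) t *
      Complex.exp (-(2 * (Real.pi : ℂ) * Complex.I * (n : ℂ) * (t : ℂ))) = ∑' k : ℤ, F k t := by
    intro t
    have h1 := (pointwise_fourier hgc hgp hsum t).mul_right
      (f t * Complex.exp (-(2 * (Real.pi : ℂ) * Complex.I * (n : ℂ) * (t : ℂ))))
    have h2 : HasSum (fun k : ℤ => F k t)
        (g t * (f t * Complex.exp (-(2 * (Real.pi : ℂ) * Complex.I * (n : ℂ) * (t : ℂ))))) := by
      refine h1.congr_fun fun k => ?_
      have e1 : Complex.exp (2 * (Real.pi:ℂ) * Complex.I * (k:ℂ) * (t:ℂ)) *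
          Complex.exp (-(2 * (Real.pi : ℂ) * Complex.I * (n : ℂ) * (t : ℂ)))
          = Complex.exp (-(2 * (Real.pi : ℂ) * Complex.I * ((n - k : ℤ) : ℂ) * (t : ℂ))) := by
        rw [← Complex.exp_add]
        congr 1
        push_cast
        ring
      rw [hF]
      simp only []
      rw [← e1]
      ring
    have h3 : ∑' k : ℤ, F k t
        = g t * (f t * Complex.exp (-(2 * (Real.pi : ℂ) * Complex.I * (n : ℂ) * (t : ℂ)))) :=
      h2.tsum_eq
    rw [h3]
    ring
  obtain ⟨Cf, hCf⟩ := (isCompact_Icc (a := (0:ℝ)) (b := 1)).exists_bound_of_continuousOn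
    hfc.continuousOn
  have hCf0 : 0 ≤ Cf := le_trans (norm_nonneg _) (hCf 0 (by norm_num))
  have hmeas : ∀ k : ℤ, AEStronglyMeasurable (F k) (volume.restrict (Ioc (0:ℝ) 1)) := by
    intro k
    refine Continuous.aestronglyMeasurable ?_
    exact continuous_const.mul (hfc.mul (Complex.continuous_exp.comp (by fun_prop)))
  have hbound : ∑' k : ℤ, ∫⁻ t in Ioc (0:ℝ) 1, ‖F k t‖₊ ∂volume ≠ ⊤ := by
    have hle : ∀ k : ℤ, ∫⁻ t in Ioc (0:ℝ) 1, ‖F k t‖₊ ∂volume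
        ≤ ENNReal.ofReal (‖fc g k‖ * Cf) := by
      intro k
      have h1 : ∀ t ∈ Ioc (0:ℝ) 1, (‖F k t‖₊ : ℝ≥0∞)
          ≤ ENNReal.ofReal (‖fc g k‖ * Cf) := by
        intro t ht
        rw [← ENNReal.ofReal_coe_nnreal, coe_nnnorm]
        refine ENNReal.ofReal_le_ofReal ?_
        have e1 : ‖F k t‖ = ‖fc g k‖ * ‖f t‖ := by
          rw [hF]
          simp only [norm_mul]
          rw [abs_exp_aux]
          ring
        rw [e1]
        exact mul_le_mul_of_nonneg_left (hCf t (Ioc_subset_Icc_self ht)) (norm_nonneg _)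
      calc ∫⁻ t in Ioc (0:ℝ) 1, ‖F k t‖₊ ∂volume
          ≤ ∫⁻ _t in Ioc (0:ℝ) 1, ENNReal.ofReal (‖fc g k‖ * Cf) ∂volume :=
            MeasureTheory.setLIntegral_mono measurable_const h1
        _ = ENNReal.ofReal (‖fc g k‖ * Cf) * volume (Ioc (0:ℝ) 1) :=
            MeasureTheory.setLIntegral_const _ _
        _ ≤ ENNReal.ofReal (‖fc g k‖ * Cf) := by
            rw [Real.volume_Ioc]
            simp
    have hsum2 : Summable fun k : ℤ => ‖fc g k‖ * Cf := hsumabs.mul_right Cf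
    have hle2 : ∑' k : ℤ, ∫⁻ t in Ioc (0:ℝ) 1, ‖F k t‖₊ ∂volume
        ≤ ∑' k : ℤ, ENNReal.ofReal (‖fc g k‖ * Cf) := ENNReal.tsum_le_tsum hle
    refine ne_top_of_le_ne_top ?_ hle2
    rw [← ENNReal.ofReal_tsum_of_nonneg (fun k => by positivity) hsum2]
    exact ENNReal.ofReal_ne_top
  have key := MeasureTheory.integral_tsum hmeas hbound
  have hterm : ∀ k : ℤ, ∫ t in Ioc (0:ℝ) 1, F k t ∂volume = fc g k * fc f (n - k) := by
    intro k
    rw [← intervalIntegral.integral_of_le (zero_le_one (α := ℝ)), hF]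
    simp only []
    rw [intervalIntegral.integral_const_mul]
    rfl
  calc fc (fun t => f t * g t) n
      = ∫ t in (0:ℝ)..1, ∑' k : ℤ, F k t := by
        unfold fc
        exact intervalIntegral.integral_congr fun t _ => hpt t
    _ = ∫ t in Ioc (0:ℝ) 1, ∑' k : ℤ, F k t ∂volume :=
        intervalIntegral.integral_of_le zero_le_one
    _ = ∑' k : ℤ, ∫ t in Ioc (0:ℝ) 1, F k t ∂volume := key
    _ = ∑' k : ℤ, fc g k * fc f (n - k) := tsum_congr hterm

lemma summable_aux_nat : Summable (fun k : ℕ => 1 / (1 + (k:ℝ)) ^ 2) := by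
  have := (summable_nat_add_iff (f := fun n : ℕ => 1 / (n:ℝ)^2) 1).mpr
    (summable_one_div_nat_pow.mpr one_lt_two)
  refine this.congr fun n => ?_
  push_cast
  ring_nf

lemma summable_aux_int : Summable (fun z : ℤ => 1 / (1 + |(z:ℝ)|) ^ 2) := by
  refine Summable.of_nat_of_neg_add_one ?_ ?_
  · refine summable_aux_nat.congr fun n => ?_
    simp [_root_.abs_of_nonneg (Nat.cast_nonneg (α := ℝ) n)]
  · have := (summable_nat_add_iff (f := fun n : ℕ => 1 / (1+(n:ℝ))^2) 1).mpr summable_aux_nat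
    refine this.congr fun n => ?_
    have : |((-(↑n + 1) : ℤ) : ℝ)| = (n:ℝ) + 1 := by
      push_cast
      rw [abs_neg, _root_.abs_of_nonneg (by positivity)]
    rw [this]
    push_cast
    ring_nf

lemma bound_div {x A C : ℝ} (hx : 0 < x) (h : x * A ≤ C) : A ≤ C * (1 / x) := by
  rw [mul_one_div, le_div_iff₀ hx]
  linarith

lemma term_bound {f g : ℝ → ℂ} {Cf Cg : ℝ} {m n : ℕ}
    (hCf : ∀ z : ℤ, (1 + |(z:ℝ)|) ^ (m+1) * ‖fc f z‖ ≤ Cf)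
    (hCg : ∀ z : ℤ, (1 + |(z:ℝ)|) ^ (n+1) * ‖fc g z‖ ≤ Cg)
    (i j k : ℕ) :
    (1 + (i:ℝ)) ^ m * (1 + (j:ℝ)) ^ n *
      ‖fc f ((i:ℤ) + ((k:ℤ)+1)) * fc g (-((k:ℤ)+1) - (j:ℤ))‖
      ≤ Cf * Cg * (1 / (1 + (k:ℝ)) ^ 2) := by
  have hCf0 : 0 ≤ Cf := le_trans (by positivity) (hCf 0)
  have hCg0 : 0 ≤ Cg := le_trans (by positivity) (hCg 0)
  set A := ‖fc f ((i:ℤ) + ((k:ℤ)+1))‖ with hA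
  set B := ‖fc g (-((k:ℤ)+1) - (j:ℤ))‖ with hB
  have hA0 : 0 ≤ A := norm_nonneg _
  have hB0 : 0 ≤ B := norm_nonneg _
  have e1 : |(((i:ℤ) + ((k:ℤ)+1) : ℤ) : ℝ)| = (i:ℝ) + (k:ℝ) + 1 := by
    push_cast
    rw [_root_.abs_of_nonneg (by positivity)]
    ring
  have e2 : |(((-((k:ℤ)+1) - (j:ℤ)) : ℤ) : ℝ)| = (j:ℝ) + (k:ℝ) + 1 := by
    push_cast
    rw [show (-((k:ℝ)+1) - (j:ℝ)) = -((j:ℝ) + (k:ℝ) + 1) by ring, abs_neg,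
      _root_.abs_of_nonneg (by positivity)]
  have h1 : (1 + (i:ℝ)) ^ m * (1 + (k:ℝ)) * A ≤ Cf := by
    have := hCf ((i:ℤ) + ((k:ℤ)+1))
    rw [e1] at this
    refine le_trans (mul_le_mul_of_nonneg_right ?_ hA0) this
    calc (1 + (i:ℝ)) ^ m * (1 + (k:ℝ))
        ≤ (1 + ((i:ℝ) + (k:ℝ) + 1)) ^ m * (1 + ((i:ℝ) + (k:ℝ) + 1)) := by
          refine mul_le_mul (pow_le_pow_left₀ (by positivity) (by linarith) m)
            (by linarith) (by positivity) (by positivity)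
      _ = (1 + ((i:ℝ) + (k:ℝ) + 1)) ^ (m+1) := (pow_succ _ _).symm
  have h2 : (1 + (j:ℝ)) ^ n * (1 + (k:ℝ)) * B ≤ Cg := by
    have := hCg (-((k:ℤ)+1) - (j:ℤ))
    rw [e2] at this
    refine le_trans (mul_le_mul_of_nonneg_right ?_ hB0) this
    calc (1 + (j:ℝ)) ^ n * (1 + (k:ℝ))
        ≤ (1 + ((j:ℝ) + (k:ℝ) + 1)) ^ n * (1 + ((j:ℝ) + (k:ℝ) + 1)) := by
          refine mul_le_mul (pow_le_pow_left₀ (by positivity) (by linarith) n)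
            (by linarith) (by positivity) (by positivity)
      _ = (1 + ((j:ℝ) + (k:ℝ) + 1)) ^ (n+1) := (pow_succ _ _).symm
  have h3 : ((1 + (i:ℝ)) ^ m * (1 + (k:ℝ)) * A) * ((1 + (j:ℝ)) ^ n * (1 + (k:ℝ)) * B)
      ≤ Cf * Cg := mul_le_mul h1 h2 (by positivity) hCf0
  rw [norm_mul, ← hA, ← hB, mul_one_div, le_div_iff₀ (by positivity : (0:ℝ) < (1 + (k:ℝ)) ^ 2)]
  calc (1 + (i:ℝ)) ^ m * (1 + (j:ℝ)) ^ n * (A * B) * (1 + (k:ℝ)) ^ 2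
      = ((1 + (i:ℝ)) ^ m * (1 + (k:ℝ)) * A) * ((1 + (j:ℝ)) ^ n * (1 + (k:ℝ)) * B) := by ring
    _ ≤ Cf * Cg := h3

lemma fc_decay (m : ℕ) : ∀ (f : ℝ → ℂ), ContDiff ℝ (⊤ : ℕ∞) f → Function.Periodic f 1 →
    ∃ C : ℝ, 0 ≤ C ∧ ∀ n : ℤ, (1 + |(n:ℝ)|) ^ m * ‖fc f n‖ ≤ C := by
  induction m with
  | zero =>
    intro f hf hfp
    obtain ⟨C, hC0, hC⟩ := fc_bound f hf.continuous
    exact ⟨C, hC0, fun n => by simpa using hC n⟩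
  | succ m ih =>
    intro f hf hfp
    obtain ⟨C, hC0, hC⟩ := ih (deriv f) (contDiff_infty_iff_deriv.mp hf).2
      (periodic_deriv' f hfp)
    refine ⟨max C (‖fc f 0‖), le_trans hC0 (le_max_left _ _), fun n => ?_⟩
    rcases eq_or_ne n 0 with rfl | hn
    · simpa using le_max_right C (‖fc f 0‖)
    · have hB : ‖fc (deriv f) n‖
          = 2 * Real.pi * |(n:ℝ)| * ‖fc f n‖ := by
        rw [fc_deriv f hf hfp n]
        simp [norm_mul, Complex.norm_I, Complex.norm_real, abs_of_pos Real.pi_pos]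
      have h1 : (1:ℝ) ≤ |(n:ℝ)| := by
        rw [← Int.cast_abs]; exact_mod_cast Int.one_le_abs hn
      have hp : (0:ℝ) ≤ (1 + |(n:ℝ)|) ^ m := by positivity
      have hA : (0:ℝ) ≤ ‖fc f n‖ := norm_nonneg _
      calc (1 + |(n:ℝ)|) ^ (m+1) * ‖fc f n‖
          = (1 + |(n:ℝ)|) ^ m * ((1 + |(n:ℝ)|) * ‖fc f n‖) := by
            rw [pow_succ]; ring
        _ ≤ (1 + |(n:ℝ)|) ^ m * (2 * Real.pi * |(n:ℝ)| * ‖fc f n‖) := by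
            refine mul_le_mul_of_nonneg_left (mul_le_mul_of_nonneg_right ?_ hA) hp
            nlinarith [Real.pi_gt_three]
        _ = (1 + |(n:ℝ)|) ^ m * ‖fc (deriv f) n‖ := by rw [hB]
        _ ≤ C := hC n
        _ ≤ max C (‖fc f 0‖) := le_max_left _ _

lemma fc_decay' (f : ℝ → ℂ) (hf : ContDiff ℝ (⊤ : ℕ∞) f) (hfp : Function.Periodic f 1) (m : ℕ) :
    ∃ C : ℝ, 0 ≤ C ∧ ∀ n : ℤ, (1 + |(n:ℝ)|) ^ m * ‖fc f n‖ ≤ C :=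
  fc_decay m f hf hfp

lemma main_core (f g : ℝ → ℂ) (hf : ContDiff ℝ (⊤ : ℕ∞) f) (hfp : Function.Periodic f 1)
    (hg : ContDiff ℝ (⊤ : ℕ∞) g) (hgp : Function.Periodic g 1) (i j : ℕ) :
    Summable (fun k : ℕ => ‖fc f ((i:ℤ) - k) * fc g ((k:ℤ) - j)‖) ∧
    (∑' k : ℕ, fc f ((i:ℤ) - k) * fc g ((k:ℤ) - j)) - fc (fun t => f t * g t) ((i:ℤ) - j)
      = -∑' k : ℕ, fc f ((i:ℤ) + ((k:ℤ) + 1)) * fc g (-((k:ℤ) + 1) - (j:ℤ)) := by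
  obtain ⟨Cf, hCf0, hCf⟩ := fc_decay' f hf hfp 0
  obtain ⟨Cg, hCg0, hCg⟩ := fc_decay' g hg hgp 2
  set h : ℤ → ℂ := fun k => fc f ((i:ℤ) - k) * fc g (k - (j:ℤ)) with hh
  -- summability of h in norm
  have hnorm : Summable fun k : ℤ => ‖h k‖ := by
    refine Summable.of_nonneg_of_le (fun k => norm_nonneg _) (fun k => ?_)
      (((((Equiv.subRight (j:ℤ)).summable_iff).mpr summable_aux_int)).mul_left (Cf * Cg))
    have hb1 : ‖fc f ((i:ℤ) - k)‖ ≤ Cf := by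
      have := hCf ((i:ℤ) - k)
      simpa using this
    have hb2 : ‖fc g (k - (j:ℤ))‖ ≤ Cg * (1 / (1 + |((k - (j:ℤ) : ℤ) : ℝ)|) ^ 2) :=
      bound_div (by positivity) (hCg (k - (j:ℤ)))
    calc ‖h k‖ = ‖fc f ((i:ℤ) - k)‖ * ‖fc g (k - (j:ℤ))‖ := by
          rw [hh]; simp [map_mul]
      _ ≤ Cf * (Cg * (1 / (1 + |((k - (j:ℤ) : ℤ) : ℝ)|) ^ 2)) := by
          refine mul_le_mul hb1 hb2 (norm_nonneg _) hCf0
      _ = Cf * Cg * ((fun z : ℤ => 1 / (1 + |(z:ℝ)|) ^ 2) ((Equiv.subRight (j:ℤ)) k)) := by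
          simp [Equiv.subRight]
          ring
  have hsummable : Summable h := Summable.of_norm hnorm
  -- value of the full sum
  have habsg : Summable fun k : ℤ => ‖fc g k‖ := by
    refine Summable.of_nonneg_of_le (fun k => norm_nonneg _) (fun k => ?_)
      (summable_aux_int.mul_left Cg)
    exact bound_div (by positivity) (hCg k)
  have hconv := fc_conv_eq f g hf.continuous hg.continuous hgp habsg ((i:ℤ) - (j:ℤ))
  have hre : ∑' k : ℤ, h k = fc (fun t => f t * g t) ((i:ℤ) - (j:ℤ)) := by
    rw [hconv]
    rw [← (Equiv.subRight (j:ℤ)).tsum_eq (fun k => fc g k * fc f ((i:ℤ) - (j:ℤ) - k))]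
    refine tsum_congr fun k => ?_
    simp only [Equiv.subRight_apply, hh]
    rw [mul_comm]
    congr 2
    ring
  -- split
  have hnat : Summable fun k : ℕ => h k := hsummable.comp_injective (fun a b hab => by omega : Function.Injective (Nat.cast : ℕ → ℤ))
  have hneg : Summable fun k : ℕ => h (-((k:ℤ) + 1)) :=
    hsummable.comp_injective (fun a b hab => by omega)
  have hsplit : HasSum h ((∑' k : ℕ, h k) + ∑' k : ℕ, h (-((k:ℤ) + 1))) :=
    HasSum.of_nat_of_neg_add_one hnat.hasSum hneg.hasSum
  have hval : fc (fun t => f t * g t) ((i:ℤ) - (j:ℤ))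
      = (∑' k : ℕ, h k) + ∑' k : ℕ, h (-((k:ℤ) + 1)) := by
    rw [← hre]
    exact hsummable.hasSum.unique hsplit
  constructor
  · refine hnorm.comp_injective (i := fun k : ℕ => (k:ℤ)) (fun a b hab => by omega : Function.Injective (Nat.cast : ℕ → ℤ)) |>.congr
      fun k => ?_
    simp [hh]
  · rw [hval]
    have e3 : ∀ k : ℕ, h (-((k:ℤ) + 1))
        = fc f ((i:ℤ) + ((k:ℤ) + 1)) * fc g (-((k:ℤ) + 1) - (j:ℤ)) := by
      intro k
      simp only [hh]
      rw [sub_neg_eq_add]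
    have e4 : (∑' k : ℕ, h k) = ∑' k : ℕ, fc f ((i:ℤ) - k) * fc g ((k:ℤ) - j) := rfl
    rw [e4.symm, tsum_congr e3]
    ring

lemma main_rd (f g : ℝ → ℂ) (hf : ContDiff ℝ (⊤ : ℕ∞) f) (hfp : Function.Periodic f 1)
    (hg : ContDiff ℝ (⊤ : ℕ∞) g) (hgp : Function.Periodic g 1) :
    RapidDecay (fun i j =>
      (∑' k : ℕ, fc f ((i : ℤ) - k) * fc g ((k : ℤ) - j))
        - fc (fun t => f t * g t) ((i : ℤ) - j)) := by
  intro m n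
  obtain ⟨Cf, hCf0, hCf⟩ := fc_decay' f hf hfp (m+1)
  obtain ⟨Cg, hCg0, hCg⟩ := fc_decay' g hg hgp (n+1)
  obtain ⟨Cf1, hCf10, hCf1⟩ := fc_decay' f hf hfp 1
  obtain ⟨Cg1, hCg10, hCg1⟩ := fc_decay' g hg hgp 1
  refine ⟨Cf * Cg * ∑' k : ℕ, 1 / (1 + (k:ℝ)) ^ 2, fun i j => ?_⟩
  simp only []
  rw [(main_core f g hf hfp hg hgp i j).2]
  set T : ℕ → ℂ := fun k => fc f ((i:ℤ) + ((k:ℤ) + 1)) * fc g (-((k:ℤ) + 1) - (j:ℤ)) with hT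
  have hsum_norm : Summable fun k : ℕ => ‖T k‖ := by
    refine Summable.of_nonneg_of_le (fun k => norm_nonneg _) (fun k => ?_)
      (summable_aux_nat.mul_left (Cf1 * Cg1))
    have h0 := term_bound (m := 0) (n := 0) hCf1 hCg1 i j k
    simpa [hT] using h0
  have habs : ‖-∑' k : ℕ, T k‖ ≤ ∑' k : ℕ, ‖T k‖ := by
    rw [norm_neg]
    exact norm_tsum_le_tsum_norm hsum_norm
  have hmono : (1 + (i:ℝ)) ^ m * (1 + (j:ℝ)) ^ n * ‖-∑' k : ℕ, T k‖
      ≤ (1 + (i:ℝ)) ^ m * (1 + (j:ℝ)) ^ n * ∑' k : ℕ, ‖T k‖ :=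
    mul_le_mul_of_nonneg_left habs (by positivity)
  refine le_trans hmono ?_
  rw [← tsum_mul_left]
  have hterm : ∀ k : ℕ, (1 + (i:ℝ)) ^ m * (1 + (j:ℝ)) ^ n * ‖T k‖
      ≤ Cf * Cg * (1 / (1 + (k:ℝ)) ^ 2) := by
    intro k
    have h0 := term_bound (m := m) (n := n) hCf hCg i j k
    simpa [hT] using h0
  calc ∑' k : ℕ, (1 + (i:ℝ)) ^ m * (1 + (j:ℝ)) ^ n * ‖T k‖
      ≤ ∑' k : ℕ, Cf * Cg * (1 / (1 + (k:ℝ)) ^ 2) := by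
        refine Summable.tsum_le_tsum hterm (hsum_norm.mul_left _) (summable_aux_nat.mul_left _)
    _ = Cf * Cg * ∑' k : ℕ, 1 / (1 + (k:ℝ)) ^ 2 := tsum_mul_left

/-- The semicommutator of two Toeplitz operators with smooth symbols is a smooth
compact operator: the series defining the matrix product converges absolutely and
`a(i,j) = Σ_{k≥0} f̂(i−k)ĝ(k−j) − (fg)^(i−j)` is rapidly decreasing; equivalently
`a(i,j) = −Σ_{k≥1} f̂(i+k)ĝ(−k−j)`. -/
theorem stmt10 (f g : ℝ → ℂ) (hf : ContDiff ℝ (⊤ : ℕ∞) f) (hfp : Function.Periodic f 1)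
    (hg : ContDiff ℝ (⊤ : ℕ∞) g) (hgp : Function.Periodic g 1) :
    (∀ i j : ℕ, Summable fun k : ℕ => ‖fc f ((i : ℤ) - k) * fc g ((k : ℤ) - j)‖) ∧
    RapidDecay (fun i j =>
      (∑' k : ℕ, fc f ((i : ℤ) - k) * fc g ((k : ℤ) - j))
        - fc (fun t => f t * g t) ((i : ℤ) - j)) ∧
    (∀ i j : ℕ,
      (∑' k : ℕ, fc f ((i : ℤ) - k) * fc g ((k : ℤ) - j))
          - fc (fun t => f t * g t) ((i : ℤ) - j)
        = -∑' k : ℕ, fc f ((i : ℤ) + ((k : ℤ) + 1)) * fc g (-((k : ℤ) + 1) - j)) := by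
  have hf' : ContDiff ℝ (⊤ : ℕ∞) f := hf.of_le (by simp)
  have hg' : ContDiff ℝ (⊤ : ℕ∞) g := hg.of_le (by simp)
  exact ⟨fun i j => (main_core f g hf' hfp hg' hgp i j).1,
    main_rd f g hf' hfp hg' hgp,
    fun i j => (main_core f g hf' hfp hg' hgp i j).2⟩
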